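/- The number of isotropic 2-dimensional subspaces of the standard symplectic space F_l^{2g} (l an odd prime, g ≥ 1) equals (l^{2g}-1)(l^{2g-2}-1)/((l^2-1)(l-1)). -/

import Mathlib

/-- The standard symplectic form on `F_l^g × F_l^g`:
`ω((x,y),(x',y')) = x·y' - x'·y`. -/
def stdSymplForm (l g : ℕ) (a b : (Fin g → ZMod l) × (Fin g → ZMod l)) : ZMod l :=
  (∑ i, a.1 i * b.2 i) - (∑ i, b.1 i * a.2 i)

/-- An isotropic 2-plane: a 2-dimensional subspace on which the standard
symplectic form vanishes identically. -/
def IsIsotropic2Plane (l g : ℕ)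
    (W : Submodule (ZMod l) ((Fin g → ZMod l) × (Fin g → ZMod l))) : Prop :=
  Module.finrank (ZMod l) W = 2 ∧
    ∀ x ∈ W, ∀ y ∈ W, stdSymplForm l g x y = 0

/-!
Double count the ordered bases `(v, w)` of isotropic planes of a nondegenerate alternating form
on `F_q^n`, i.e. the pairs with `v ≠ 0`, `w ∉ F_q ∙ v` and `ω v w = 0`. Choosing `v` first, `w`
ranges over the hyperplane `v^⊥` (nondegeneracy) minus the line `F_q ∙ v ⊆ v^⊥` (alternation),
giving `(q^n - 1)(q^{n-1} - q)` pairs, while each isotropic plane has `(q^2 - 1)(q^2 - q)` ordered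
bases. For `n = 2g` and `q = l`, cancelling a factor `l` gives the formula.
-/

open Module Submodule

lemma Nat.card_eq_mul_of_card_fiber_eq {α β : Type*} [Finite α] [Finite β] (f : α → β) {c : ℕ}
    (hf : ∀ b, Nat.card {a // f a = b} = c) : Nat.card α = Nat.card β * c := by
  have := Fintype.ofFinite β
  rw [← Nat.card_congr (Equiv.sigmaFiberEquiv f), Nat.card_sigma,
    Finset.sum_congr rfl fun b _ => hf b, Finset.sum_const, Finset.card_univ, smul_eq_mul,
    Nat.card_eq_fintype_card]

lemma Nat.card_subtype_prod_eq_mul {α β : Type*} [Finite α] [Finite β] (p : α → Prop)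
    (r : α → β → Prop) {c : ℕ} (hr : ∀ a, p a → Nat.card {b // r a b} = c) :
    Nat.card {x : α × β // p x.1 ∧ r x.1 x.2} = Nat.card {a // p a} * c := by
  let e : {x : α × β // p x.1 ∧ r x.1 x.2} ≃ Σ a : {a // p a}, {b // r a b} :=
    { toFun x := ⟨⟨x.1.1, x.2.1⟩, x.1.2, x.2.2⟩
      invFun y := ⟨(y.1, y.2), y.1.2, y.2.2⟩ }
  have := Fintype.ofFinite {a // p a}
  rw [Nat.card_congr e, Nat.card_sigma, Finset.sum_congr rfl fun a _ => hr a.1 a.2,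
    Finset.sum_const, Finset.card_univ, smul_eq_mul, Nat.card_eq_fintype_card]

section

variable {K V : Type*} [Field K] [AddCommGroup V] [Module K V]

def IsIsotropicPlane (B : LinearMap.BilinForm K V) (W : Submodule K V) : Prop :=
  finrank K W = 2 ∧ ∀ x ∈ W, ∀ y ∈ W, B x y = 0

def IsIsotropicIndepPair (B : LinearMap.BilinForm K V) (x : V × V) : Prop :=
  x.1 ≠ 0 ∧ B x.1 x.2 = 0 ∧ x.2 ∉ K ∙ x.1

lemma finrank_span_pair {v w : V} (hv : v ≠ 0) (hw : w ∉ K ∙ v) :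
    finrank K (span K {v, w}) = 2 := by
  have hli : LinearIndependent K ![v, w] := by
    rw [LinearIndependent.pair_iff' hv]
    rintro a rfl
    exact hw (smul_mem _ a (mem_span_singleton_self v))
  have h := finrank_span_eq_card hli
  rw [Matrix.range_cons_cons_empty] at h
  simpa using h

variable {B : LinearMap.BilinForm K V}

lemma isIsotropicPlane_span_pair (hB : B.IsAlt) {v w : V} (hv : v ≠ 0) (hw : w ∉ K ∙ v)
    (hvw : B v w = 0) : IsIsotropicPlane B (span K {v, w}) := by
  refine ⟨finrank_span_pair hv hw, fun x hx y hy => ?_⟩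
  obtain ⟨a, b, rfl⟩ := mem_span_pair.mp hx
  obtain ⟨c, d, rfl⟩ := mem_span_pair.mp hy
  have hwv : B w v = 0 := hB.eq_iff.mp hvw
  simp [hvw, hwv, hB.self_eq_zero]

variable [Finite V]

lemma Submodule.natCard_mem_and_notMem_of_le {S U : Submodule K V} (h : S ≤ U) :
    Nat.card {w // w ∈ U ∧ w ∉ S} = Nat.card K ^ finrank K U - Nat.card K ^ finrank K S := by
  change Nat.card ((U : Set V) \ S : Set V) = _
  rw [Nat.card_coe_set_eq, Set.ncard_sdiff h, ← Nat.card_coe_set_eq, ← Nat.card_coe_set_eq]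
  exact congr_arg₂ _ (natCard_eq_pow_finrank (V := U)) (natCard_eq_pow_finrank (V := S))

lemma isIsotropicIndepPair_and_span_eq_iff {W : Submodule K V} (hW : IsIsotropicPlane B W)
    {x : V × V} :
    IsIsotropicIndepPair B x ∧ span K {x.1, x.2} = W ↔
      (x.1 ∈ W ∧ x.1 ≠ 0) ∧ (x.2 ∈ W ∧ x.2 ∉ K ∙ x.1) := by
  constructor
  · rintro ⟨⟨h1, -, h2⟩, rfl⟩
    exact ⟨⟨subset_span (by simp), h1⟩, subset_span (by simp), h2⟩
  · rintro ⟨⟨h1W, h1⟩, h2W, h2⟩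
    refine ⟨⟨h1, hW.2 _ h1W _ h2W, h2⟩, eq_of_le_of_finrank_eq ?_ ?_⟩
    · simpa [span_le, Set.insert_subset_iff] using ⟨h1W, h2W⟩
    · rw [finrank_span_pair h1 h2, hW.1]

lemma natCard_isIsotropicIndepPair (hB : B.IsAlt) (hB' : B.SeparatingLeft) :
    Nat.card {x // IsIsotropicIndepPair B x} =
      (Nat.card K ^ finrank K V - 1) * (Nat.card K ^ (finrank K V - 1) - Nat.card K) := by
  have hbase : Nat.card {v : V // v ≠ 0} = Nat.card K ^ finrank K V - 1 := by
    have h := natCard_mem_and_notMem_of_le (bot_le : (⊥ : Submodule K V) ≤ ⊤)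
    simpa using h
  have hfiber (v : V) (hv : v ≠ 0) :
      Nat.card {w // B v w = 0 ∧ w ∉ K ∙ v} = Nat.card K ^ (finrank K V - 1) - Nat.card K := by
    have hker : finrank K (LinearMap.ker (B v)) = finrank K V - 1 := by
      have hBv : B v ≠ 0 := fun h => hv (hB' v fun y => by rw [h, LinearMap.zero_apply])
      have := Module.Dual.finrank_ker_add_one_of_ne_zero hBv
      omega
    have hle : K ∙ v ≤ LinearMap.ker (B v) := by
      rw [span_singleton_le_iff_mem, LinearMap.mem_ker]
      exact hB.self_eq_zero v
    have h := natCard_mem_and_notMem_of_le hle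
    rwa [hker, finrank_span_singleton hv, pow_one] at h
  rw [← hbase]
  exact Nat.card_subtype_prod_eq_mul _ _ hfiber

lemma natCard_isIsotropicIndepPair_span_eq {W : Submodule K V} (hW : IsIsotropicPlane B W) :
    Nat.card {x : {x // IsIsotropicIndepPair B x} // span K {x.1.1, x.1.2} = W} =
      (Nat.card K ^ 2 - 1) * (Nat.card K ^ 2 - Nat.card K) := by
  have hbase : Nat.card {v // v ∈ W ∧ v ≠ 0} = Nat.card K ^ 2 - 1 := by
    have h := natCard_mem_and_notMem_of_le (bot_le : ⊥ ≤ W)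
    rw [hW.1, finrank_bot, pow_zero] at h
    simpa using h
  have hfiber (v : V) (hv : v ∈ W ∧ v ≠ 0) :
      Nat.card {w // w ∈ W ∧ w ∉ K ∙ v} = Nat.card K ^ 2 - Nat.card K := by
    have h := natCard_mem_and_notMem_of_le ((span_singleton_le_iff_mem v W).mpr hv.1)
    rwa [hW.1, finrank_span_singleton hv.2, pow_one] at h
  rw [← hbase, ← Nat.card_subtype_prod_eq_mul _ _ hfiber]
  exact Nat.card_congr <| (Equiv.subtypeSubtypeEquivSubtypeInter _ _).trans
    (Equiv.subtypeEquivRight fun _ => isIsotropicIndepPair_and_span_eq_iff hW)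

theorem natCard_isIsotropicPlane_mul (hB : B.IsAlt) (hB' : B.SeparatingLeft) :
    Nat.card {W // IsIsotropicPlane B W} * ((Nat.card K ^ 2 - 1) * (Nat.card K ^ 2 - Nat.card K)) =
      (Nat.card K ^ finrank K V - 1) * (Nat.card K ^ (finrank K V - 1) - Nat.card K) := by
  rw [← natCard_isIsotropicIndepPair hB hB']
  let spanPlane (x : {x // IsIsotropicIndepPair B x}) : {W // IsIsotropicPlane B W} :=
    ⟨span K {x.1.1, x.1.2}, isIsotropicPlane_span_pair hB x.2.1 x.2.2.2 x.2.2.1⟩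
  refine (Nat.card_eq_mul_of_card_fiber_eq spanPlane fun W => ?_).symm
  rw [← natCard_isIsotropicIndepPair_span_eq W.2]
  exact Nat.card_congr <| Equiv.subtypeEquivRight fun _ => Subtype.ext_iff

end

noncomputable def stdSymplBilin (l g : ℕ) :
    LinearMap.BilinForm (ZMod l) ((Fin g → ZMod l) × (Fin g → ZMod l)) :=
  LinearMap.mk₂ (ZMod l) (stdSymplForm l g)
    (fun a a' b => by simp [stdSymplForm, add_mul, mul_add, Finset.sum_add_distrib]; ring)
    (fun c a b => by simp [stdSymplForm, Finset.mul_sum, mul_sub, mul_assoc, mul_left_comm])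
    (fun a b b' => by simp [stdSymplForm, add_mul, mul_add, Finset.sum_add_distrib]; ring)
    (fun c a b => by simp [stdSymplForm, Finset.mul_sum, mul_sub, mul_assoc, mul_left_comm])

lemma isAlt_stdSymplBilin (l g : ℕ) : (stdSymplBilin l g).IsAlt := fun a => by
  simp [stdSymplBilin, stdSymplForm]

lemma separatingLeft_stdSymplBilin (l g : ℕ) : (stdSymplBilin l g).SeparatingLeft := by
  rintro ⟨x, y⟩ h
  ext i
  · simpa [stdSymplBilin, stdSymplForm, Pi.single_apply] using h (0, Pi.single i 1)
  · simpa [stdSymplBilin, stdSymplForm, Pi.single_apply] using h (Pi.single i 1, 0)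

lemma isIsotropicPlane_stdSymplBilin_iff {l g : ℕ} [Fact (Nat.Prime l)]
    {W : Submodule (ZMod l) ((Fin g → ZMod l) × (Fin g → ZMod l))} :
    IsIsotropicPlane (stdSymplBilin l g) W ↔ IsIsotropic2Plane l g W :=
  Iff.rfl

theorem card_isotropic_two_planes_general (l g : ℕ) [Fact (Nat.Prime l)]
    (hg : 1 ≤ g) :
    Nat.card {W : Submodule (ZMod l) ((Fin g → ZMod l) × (Fin g → ZMod l)) //
        IsIsotropic2Plane l g W} * ((l ^ 2 - 1) * (l - 1)) =
      (l ^ (2 * g) - 1) * (l ^ (2 * g - 2) - 1) := by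
  have key := natCard_isIsotropicPlane_mul (isAlt_stdSymplBilin l g)
    (separatingLeft_stdSymplBilin l g)
  have hdim : finrank (ZMod l) ((Fin g → ZMod l) × (Fin g → ZMod l)) = 2 * g := by
    rw [finrank_prod, finrank_fin_fun, two_mul]
  have hl2 : l ^ 2 - l = (l - 1) * l := by rw [Nat.sub_one_mul, sq]
  have hl2g : l ^ (2 * g - 1) - l = (l ^ (2 * g - 2) - 1) * l := by
    rw [Nat.sub_one_mul, ← pow_succ]
    congr 2
    omega
  simp only [isIsotropicPlane_stdSymplBilin_iff] at key
  rw [Nat.card_zmod, hdim, hl2, hl2g] at key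
  refine Nat.eq_of_mul_eq_mul_right (Fact.out : l.Prime).pos ?_
  simpa only [mul_assoc] using key

/-- The number of isotropic 2-dimensional subspaces of the standard symplectic
space `F_l^{2g}` (`l` an odd prime, `g ≥ 1`) equals
`(l^{2g}-1)(l^{2g-2}-1)/((l^2-1)(l-1))`. -/
theorem card_isotropic_two_planes (l g : ℕ) [Fact (Nat.Prime l)] (hl : Odd l)
    (hg : 1 ≤ g) :
    Nat.card {W : Submodule (ZMod l) ((Fin g → ZMod l) × (Fin g → ZMod l)) //
        IsIsotropic2Plane l g W} * ((l ^ 2 - 1) * (l - 1)) =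
      (l ^ (2 * g) - 1) * (l ^ (2 * g - 2) - 1) :=
  card_isotropic_two_planes_general l g hg
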